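/- Claim (the paper's Claim 3.5). Let r be an order with levels on X, let (τ₀, ω₀) be a persistence pair of r, and let ε > 0. Then for every n-simplex ω̃ ∉ SV_ε(r, τ₀, ω₀) there exists q ∈ R_ε such that ω̃ ∉ OV(q, ω₀). -/

import Mathlib

open scoped Classical

namespace StableVol

/-- A finite abstract simplicial complex of dimension `n`: a finite family of nonempty
finite subsets of the vertex set, closed under nonempty subsets, in which every element
is contained in an element of cardinality `n+1`. -/
structure NComplex (V : Type*) [DecidableEq V] (n : ℕ) where
  X : Finset (Finset V)
  nonempty_mem : ∀ σ ∈ X, σ.Nonempty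
  down_closed : ∀ σ ∈ X, ∀ σ' : Finset V, σ' ⊆ σ → σ'.Nonempty → σ' ∈ X
  contained_top : ∀ σ ∈ X, ∃ ω ∈ X, σ ⊆ ω ∧ ω.card = n + 1

variable {V : Type*} [DecidableEq V] {n : ℕ}

/-- An `n`-cell is either an `n`-simplex (`some ω`) or the formal cell `ω∞` (`none`). -/
abbrev Cell (V : Type*) := Option (Finset V)

/-- `τ` is a face of the cell `c`.  For `c = some ω` this means that `ω` is an
`n`-simplex of `X` containing `τ`; the faces of `ω∞ = none` are the `(n-1)`-simplices
having exactly one `n`-simplex coface. -/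
def faceCell (C : NComplex V n) (τ : Finset V) : Cell V → Prop
  | some ω => ω ∈ C.X ∧ ω.card = n + 1 ∧ τ ⊆ ω
  | none => {ω | ω ∈ C.X ∧ ω.card = n + 1 ∧ τ ⊆ ω}.ncard = 1

def IsCell (C : NComplex V n) : Cell V → Prop
  | some ω => ω ∈ C.X ∧ ω.card = n + 1
  | none => True

/-- Adjacency in the dual graph, restricted to the edge set `E ⊆ X^(n-1)`. -/
def adj (C : NComplex V n) (E : Set (Finset V)) (c c' : Cell V) : Prop :=
  ∃ τ ∈ E, faceCell C τ c ∧ faceCell C τ c' ∧ c ≠ c'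

/-- `KV C E c₀`: the set of `n`-cells in the connected component of `c₀` in the
subgraph of the dual graph with edge set `E`. -/
def KV (C : NComplex V n) (E : Set (Finset V)) (c₀ : Cell V) : Set (Cell V) :=
  {c | Relation.ReflTransGen (adj C E) c₀ c}

/-- Every `(n-1)`-simplex of `X` is a face of exactly two `n`-cells. -/
def TwoCofaces (C : NComplex V n) : Prop :=
  ∀ τ ∈ C.X, τ.card = n →
    ∃ c₁ c₂ : Cell V, c₁ ≠ c₂ ∧ ∀ c : Cell V, faceCell C τ c ↔ (c = c₁ ∨ c = c₂)

/-- The dual graph (with full edge set `X^(n-1)`) is connected. -/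
def DualConn (C : NComplex V n) : Prop :=
  ∀ c c' : Cell V, IsCell C c → IsCell C c' →
    c' ∈ KV C {τ | τ ∈ C.X ∧ τ.card = n} c

/-- A level function: monotone with respect to strict inclusion of simplices. -/
def IsLevelFun (C : NComplex V n) (lev : Finset V → ℝ) : Prop :=
  ∀ σ ∈ C.X, ∀ σ' ∈ C.X, σ ⊂ σ' → lev σ ≤ lev σ'

/-- `(lev, slt)` is an order with levels on `X`: `lev` is a level function and `slt`
is (the strict form of) a linear order on `X` refining both `lev` and strict
inclusion. -/
def IsOWL (C : NComplex V n) (lev : Finset V → ℝ)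
    (slt : Finset V → Finset V → Prop) : Prop :=
  IsLevelFun C lev ∧
  (∀ σ ∈ C.X, ¬ slt σ σ) ∧
  (∀ σ ∈ C.X, ∀ σ' ∈ C.X, ∀ σ'' ∈ C.X, slt σ σ' → slt σ' σ'' → slt σ σ'') ∧
  (∀ σ ∈ C.X, ∀ σ' ∈ C.X, σ ≠ σ' → slt σ σ' ∨ slt σ' σ) ∧
  (∀ σ ∈ C.X, ∀ σ' ∈ C.X, slt σ σ' → lev σ ≤ lev σ') ∧
  (∀ σ ∈ C.X, ∀ σ' ∈ C.X, σ ⊂ σ' → slt σ σ')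

/-- Extension of a strict order on simplices to `n`-cells, `ω∞ = none` being the
unique maximum. -/
def cslt (slt : Finset V → Finset V → Prop) : Cell V → Cell V → Prop
  | some σ, some σ' => slt σ σ'
  | some _, none => True
  | none, _ => False

/-- `m` is the maximum cell of the set `S` with respect to the order `slt`. -/
def IsMaxCell (slt : Finset V → Finset V → Prop) (S : Set (Cell V)) (m : Cell V) :
    Prop :=
  m ∈ S ∧ ∀ c ∈ S, c ≠ m → cslt slt c m

/-- Edge set of `G(≻ σ₀)`: the `(n-1)`-simplices strictly above `σ₀`. -/
def Egt (C : NComplex V n) (slt : Finset V → Finset V → Prop) (σ₀ : Finset V) :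
    Set (Finset V) :=
  {τ | τ ∈ C.X ∧ τ.card = n ∧ slt σ₀ τ}

/-- Edge set of `G(⪰ σ₀)`. -/
def Ege (C : NComplex V n) (slt : Finset V → Finset V → Prop) (σ₀ : Finset V) :
    Set (Finset V) :=
  {τ | τ ∈ C.X ∧ τ.card = n ∧ (τ = σ₀ ∨ slt σ₀ τ)}

/-- Edge set of `G(lev ≥ s)`. -/
def Elev (C : NComplex V n) (lev : Finset V → ℝ) (s : ℝ) : Set (Finset V) :=
  {τ | τ ∈ C.X ∧ τ.card = n ∧ s ≤ lev τ}

/-- `(τ₀, ω₀)` is a persistence pair of the order `slt`: the two `n`-cells having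
`τ₀` as a face lie in distinct connected components of `G(≻ τ₀)`, and `ω₀` is the
smaller of the two maximum cells of these two components. -/
def IsPersPair (C : NComplex V n) (slt : Finset V → Finset V → Prop)
    (τ₀ ω₀ : Finset V) : Prop :=
  τ₀ ∈ C.X ∧ τ₀.card = n ∧ ω₀ ∈ C.X ∧ ω₀.card = n + 1 ∧
  ∃ c₁ c₂ : Cell V, c₁ ≠ c₂ ∧ faceCell C τ₀ c₁ ∧ faceCell C τ₀ c₂ ∧
    c₂ ∉ KV C (Egt C slt τ₀) c₁ ∧
    ∃ m₂ : Cell V,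
      IsMaxCell slt (KV C (Egt C slt τ₀) c₁) (some ω₀) ∧
      IsMaxCell slt (KV C (Egt C slt τ₀) c₂) m₂ ∧
      cslt slt (some ω₀) m₂

/-- The optimal volume `OV(q, ω₀) = K_V(G(≻_q τ_{q,ω₀}), ω₀)`. -/
def OV (C : NComplex V n) (slt : Finset V → Finset V → Prop) (ω₀ : Finset V) :
    Set (Cell V) :=
  {c | ∃ τ, IsPersPair C slt τ ω₀ ∧ c ∈ KV C (Egt C slt τ) (some ω₀)}

/-- The stable volume `SV_ε(r, τ₀, ω₀) = K_V(G(r̂ ≥ r̂(τ₀) + ε), ω₀)`. -/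
def SV (C : NComplex V n) (lev : Finset V → ℝ) (τ₀ ω₀ : Finset V) (ε : ℝ) :
    Set (Cell V) :=
  KV C (Elev C lev (lev τ₀ + ε)) (some ω₀)

/-- `(qlev, qslt) ∈ R_ε`: an order with levels uniformly `ε/2`-close to `rlev`
satisfying the `(r, ω₀)`-order condition. -/
def InR (C : NComplex V n) (rlev : Finset V → ℝ)
    (rslt : Finset V → Finset V → Prop) (ω₀ : Finset V) (ε : ℝ)
    (qlev : Finset V → ℝ) (qslt : Finset V → Finset V → Prop) : Prop :=
  IsOWL C qlev qslt ∧ (∀ σ ∈ C.X, |qlev σ - rlev σ| < ε / 2) ∧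
  (∀ σ ∈ C.X, rslt σ ω₀ → qslt σ ω₀)

/-- `F_{ε,n}`: the `n`-simplices with level at least `lev τ₀ + ε` that precede `ω₀`. -/
def Fcells (C : NComplex V n) (lev : Finset V → ℝ)
    (slt : Finset V → Finset V → Prop) (τ₀ ω₀ : Finset V) (ε : ℝ) :
    Set (Finset V) :=
  {σ | σ ∈ C.X ∧ σ.card = n + 1 ∧ lev τ₀ + ε ≤ lev σ ∧ slt σ ω₀}

/-- `F_{ε,n-1}`: the `(n-1)`-simplices with level at least `lev τ₀ + ε` that
precede `ω₀`. -/
def Fedges (C : NComplex V n) (lev : Finset V → ℝ)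
    (slt : Finset V → Finset V → Prop) (τ₀ ω₀ : Finset V) (ε : ℝ) :
    Set (Finset V) :=
  {σ | σ ∈ C.X ∧ σ.card = n ∧ lev τ₀ + ε ≤ lev σ ∧ slt σ ω₀}

/-- `τ*(∂z)`: the `ℤ/2ℤ`-sum of the coefficients of `z` over the `n`-simplex
cofaces of `τ`. -/
def bsum (C : NComplex V n) (τ : Finset V) (z : Finset V → ZMod 2) : ZMod 2 :=
  ∑ ω ∈ C.X.filter (fun ω => ω.card = n + 1 ∧ τ ⊆ ω), z ω

/-- A feasible chain `z = ω₀ + Σ_{ω ∈ F_{ε,n}} α_ω ω` with `τ*(∂z) = 0` for all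
`τ ∈ F_{ε,n-1}`. -/
def IsFeasible (C : NComplex V n) (lev : Finset V → ℝ)
    (slt : Finset V → Finset V → Prop) (τ₀ ω₀ : Finset V) (ε : ℝ)
    (z : Finset V → ZMod 2) : Prop :=
  z ω₀ = 1 ∧
  (∀ ω : Finset V, ω ≠ ω₀ → ω ∉ Fcells C lev slt τ₀ ω₀ ε → z ω = 0) ∧
  (∀ τ ∈ Fedges C lev slt τ₀ ω₀ ε, bsum C τ z = 0)

/-- `‖z‖₀`: the number of simplices of `X` with nonzero coefficient in `z`. -/
def norm0 (C : NComplex V n) (z : Finset V → ZMod 2) : ℕ :=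
  (C.X.filter fun ω => z ω ≠ 0).card

/-- The level function of the perturbed order `q(r, η, A)`. -/
noncomputable def pertLev (C : NComplex V n) (rlev : Finset V → ℝ) (η : ℝ)
    (A : Set (Finset V)) : Finset V → ℝ :=
  fun σ => if (σ ∈ C.X ∧ σ.card = n + 1) ∨ σ ∈ A then rlev σ + η else rlev σ - η

/-- The strict order of the perturbed order `q(r, η, A)`. -/
def pertSlt (C : NComplex V n) (rlev : Finset V → ℝ)
    (rslt : Finset V → Finset V → Prop) (η : ℝ) (A : Set (Finset V)) :
    Finset V → Finset V → Prop :=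
  fun σ σ' => pertLev C rlev η A σ < pertLev C rlev η A σ' ∨
    (pertLev C rlev η A σ = pertLev C rlev η A σ' ∧ rslt σ σ')

/-- The `(n-1)`-simplices that are edges of the connected component of `c₀` in the
subgraph with edge set `E`. -/
def compEdges (C : NComplex V n) (E : Set (Finset V)) (c₀ : Cell V) :
    Set (Finset V) :=
  {τ | τ ∈ E ∧ ∃ c, faceCell C τ c ∧ c ∈ KV C E c₀}

/-- `IsPath C E c c' vs es`: `vs` is the vertex list and `es` the edge list of a walk
from `c` to `c'` in the subgraph of the dual graph with edge set `E`. -/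
inductive IsPath (C : NComplex V n) (E : Set (Finset V)) :
    Cell V → Cell V → List (Cell V) → List (Finset V) → Prop
  | nil (c : Cell V) : IsPath C E c c [c] []
  | cons {c c' c'' : Cell V} {vs : List (Cell V)} {es : List (Finset V)}
      {τ : Finset V} : τ ∈ E → faceCell C τ c → faceCell C τ c' → c ≠ c' →
      IsPath C E c' c'' vs es → IsPath C E c c'' (c :: vs) (τ :: es)


/-!
Walk in `G(⪰_r τ₀)` from `ω₀` to the maximum `m₂ ≻_r ω₀` of the other component of
`G(≻_r τ₀)`. The walk leaves the stable volume `SV` through an edge `τ*` of level in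
`[r̂(τ₀), r̂(τ₀) + ε)`, and after its last exit it only uses edges without cofaces in `SV`.
Let `A` consist of these edges and of all edges of level `≥ r̂(τ₀) + ε`. Raise the
`n`-simplices and `A` by `η`, lower all other simplices by `η`, and place `τ*` in the gap
between the two groups. For `η` just below `ε/2` this gives `q ∈ R_ε` with `G(≻_q τ*)`
having edge set exactly `A`: there the component of `ω₀` is `SV`, whose `q`-maximum is `ω₀`,
and `τ*` separates it from a component containing `m₂ ≻_q ω₀`. Hence `(τ*, ω₀)` is the
persistence pair of `q` at `ω₀` and `OV(q, ω₀) = SV ∌ ω̃`.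
-/

open Relation

section DualGraph

variable {C : NComplex V n} {E E' : Set (Finset V)} {c c₀ : Cell V}

lemma adj_symm {c' : Cell V} (h : adj C E c c') : adj C E c' c := by
  obtain ⟨τ, hτ, h₁, h₂, hne⟩ := h
  exact ⟨τ, hτ, h₂, h₁, hne.symm⟩

lemma adj_mono (hE : E ⊆ E') {c' : Cell V} (h : adj C E c c') : adj C E' c c' := by
  obtain ⟨τ, hτ, h₁, h₂, hne⟩ := h
  exact ⟨τ, hE hτ, h₁, h₂, hne⟩

lemma KV_mono (hE : E ⊆ E') (c₀ : Cell V) : KV C E c₀ ⊆ KV C E' c₀ :=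
  fun _ h => ReflTransGen.mono (fun _ _ => adj_mono hE) _ _ h

lemma mem_KV_comm : c ∈ KV C E c₀ ↔ c₀ ∈ KV C E c := by
  suffices ∀ {a b : Cell V}, ReflTransGen (adj C E) a b → ReflTransGen (adj C E) b a from
    ⟨this, this⟩
  intro a b h
  induction h with
  | refl => exact .refl
  | tail _ hstep ih => exact ih.head (adj_symm hstep)

lemma KV_eq_of_mem (h : c ∈ KV C E c₀) : KV C E c = KV C E c₀ := by
  ext x
  exact ⟨fun hx => ReflTransGen.trans h hx, fun hx => ReflTransGen.trans (mem_KV_comm.1 h) hx⟩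

lemma IsCell.of_faceCell {τ : Finset V} (h : faceCell C τ c) : IsCell C c := by
  cases c with
  | none => trivial
  | some ω => exact ⟨h.1, h.2.1⟩

lemma IsCell.of_mem_KV (hc₀ : IsCell C c₀) (h : c ∈ KV C E c₀) : IsCell C c := by
  induction h with
  | refl => exact hc₀
  | tail _ hstep => exact IsCell.of_faceCell hstep.choose_spec.2.2.1

lemma IsCell.mem_cells (h : IsCell C c) : c ∈ insert none (C.X.image some) := by
  cases c with
  | none => exact Finset.mem_insert_self _ _
  | some ω => exact Finset.mem_insert_of_mem (Finset.mem_image_of_mem _ h.1)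

lemma TwoCofaces.eq_or_eq (htwo : TwoCofaces C) {τ : Finset V} (hτ : τ ∈ C.X)
    (hτc : τ.card = n) {y z : Cell V} (hy : faceCell C τ y) (hz : faceCell C τ z)
    (hyz : y ≠ z) (hc : faceCell C τ c) : c = y ∨ c = z := by
  obtain ⟨c₁, c₂, -, hiff⟩ := htwo τ hτ hτc
  rcases (hiff y).1 hy with rfl | rfl <;> rcases (hiff z).1 hz with rfl | rfl <;>
    rcases (hiff c).1 hc with rfl | rfl <;> tauto

def edgesAwayFrom (C : NComplex V n) (E : Set (Finset V)) (S : Set (Cell V)) :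
    Set (Finset V) :=
  {e | e ∈ E ∧ ∀ c, faceCell C e c → c ∉ S}

/-- A walk from `S` to the outside of `S` crosses the boundary of `S` one last time. -/
lemma exists_exit_edge (htwo : TwoCofaces C) (hE : ∀ e ∈ E, e ∈ C.X ∧ e.card = n)
    {S : Set (Cell V)} {a b : Cell V} (ha : a ∈ S) (hb : b ∉ S)
    (h : ReflTransGen (adj C E) a b) :
    ∃ e ∈ E, ∃ y z, faceCell C e y ∧ faceCell C e z ∧ y ≠ z ∧ y ∈ S ∧ z ∉ S ∧
      ReflTransGen (adj C (edgesAwayFrom C E S)) z b := by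
  induction h with
  | refl => exact absurd ha hb
  | @tail b' b _ hstep ih =>
    obtain ⟨e, he, hfb', hfb, hne⟩ := hstep
    by_cases hb'S : b' ∈ S
    · exact ⟨e, he, b', b, hfb', hfb, hne, hb'S, hb, .refl⟩
    obtain ⟨e', he', y, z, hy, hz, hyz, hyS, hzS, hzb'⟩ := ih hb'S
    refine ⟨e', he', y, z, hy, hz, hyz, hyS, hzS,
      hzb'.tail ⟨e, ⟨he, fun d hd => ?_⟩, hfb', hfb, hne⟩⟩
    rcases htwo.eq_or_eq (hE e he).1 (hE e he).2 hfb' hfb hne hd with rfl | rfl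
    exacts [hb'S, hb]

lemma KV_union_edgesAwayFrom :
    KV C (E ∪ edgesAwayFrom C E' (KV C E c₀)) c₀ = KV C E c₀ := by
  refine Set.Subset.antisymm (fun c hc => ?_) (KV_mono Set.subset_union_left c₀)
  induction hc with
  | refl => exact .refl
  | tail _ hstep ih =>
    obtain ⟨e, he | he, hb, hc, hne⟩ := hstep
    · exact ReflTransGen.tail ih ⟨e, he, hb, hc, hne⟩
    · exact absurd ih (he.2 _ hb)

end DualGraph

section Orders

structure IsStrictTotalOn (X : Finset (Finset V)) (slt : Finset V → Finset V → Prop) :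
    Prop where
  irrefl : ∀ σ ∈ X, ¬ slt σ σ
  trans : ∀ σ ∈ X, ∀ σ' ∈ X, ∀ σ'' ∈ X, slt σ σ' → slt σ' σ'' → slt σ σ''
  total : ∀ σ ∈ X, ∀ σ' ∈ X, σ ≠ σ' → slt σ σ' ∨ slt σ' σ

variable {C : NComplex V n} {slt : Finset V → Finset V → Prop}

lemma IsOWL.isStrictTotalOn {lev : Finset V → ℝ} (h : IsOWL C lev slt) :
    IsStrictTotalOn C.X slt :=
  ⟨h.2.1, h.2.2.1, h.2.2.2.1⟩

lemma cslt_irrefl (ho : IsStrictTotalOn C.X slt) : ∀ {c : Cell V}, IsCell C c → ¬ cslt slt c c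
  | some σ, hc => ho.irrefl σ hc.1
  | none, _ => id

lemma cslt_trans (ho : IsStrictTotalOn C.X slt) :
    ∀ {a b c : Cell V}, IsCell C a → IsCell C b → IsCell C c →
    cslt slt a b → cslt slt b c → cslt slt a c
  | some _, some _, some _, ha, hb, hc, hab, hbc => ho.trans _ ha.1 _ hb.1 _ hc.1 hab hbc
  | some _, _, none, _, _, _, _, _ => trivial
  | some _, none, some _, _, _, _, _, hbc => hbc.elim
  | none, _, _, _, _, _, hab, _ => hab.elim

lemma cslt_asymm (ho : IsStrictTotalOn C.X slt) {a b : Cell V} (ha : IsCell C a)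
    (hb : IsCell C b) (hab : cslt slt a b) :
    ¬ cslt slt b a :=
  fun hba => cslt_irrefl ho ha (cslt_trans ho ha hb ha hab hba)

lemma cslt_total (ho : IsStrictTotalOn C.X slt) :
    ∀ {a b : Cell V}, IsCell C a → IsCell C b → a ≠ b →
    cslt slt a b ∨ cslt slt b a
  | some σ, some σ', ha, hb, hne => ho.total σ ha.1 σ' hb.1 (by rintro rfl; exact hne rfl)
  | some _, none, _, _, _ => Or.inl trivial
  | none, some _, _, _, _ => Or.inr trivial
  | none, none, _, _, hne => absurd rfl hne

lemma exists_max_cslt (ho : IsStrictTotalOn C.X slt) (F : Finset (Cell V))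
    (hF : ∀ c ∈ F, IsCell C c) (hne : F.Nonempty) :
    ∃ m ∈ F, ∀ c ∈ F, c ≠ m → cslt slt c m := by
  induction F using Finset.induction_on with
  | empty => simp at hne
  | @insert a F ha ih =>
    rcases F.eq_empty_or_nonempty with rfl | hFne
    · exact ⟨a, Finset.mem_insert_self _ _, by simp⟩
    have hFcell : ∀ c ∈ F, IsCell C c := fun c hc => hF c (Finset.mem_insert_of_mem hc)
    have hacell := hF a (Finset.mem_insert_self a F)
    obtain ⟨m, hm, hmax⟩ := ih hFcell hFne
    rcases cslt_total ho hacell (hFcell m hm) (by rintro rfl; exact ha hm) with ham | hma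
    · refine ⟨m, Finset.mem_insert_of_mem hm, fun c hc hcm => ?_⟩
      rcases Finset.mem_insert.1 hc with rfl | hc
      exacts [ham, hmax c hc hcm]
    · refine ⟨a, Finset.mem_insert_self a F, fun c hc hca => ?_⟩
      rcases Finset.mem_insert.1 hc with rfl | hc
      · exact absurd rfl hca
      rcases eq_or_ne c m with rfl | hcm
      · exact hma
      exact cslt_trans ho (hFcell c hc) (hFcell m hm) hacell (hmax c hc hcm) hma

lemma exists_isMaxCell_KV (ho : IsStrictTotalOn C.X slt) {E : Set (Finset V)} {c₀ : Cell V}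
    (hc₀ : IsCell C c₀) :
    ∃ m, IsMaxCell slt (KV C E c₀) m := by
  obtain ⟨m, hm, hmax⟩ := exists_max_cslt ho
    ((insert none (C.X.image some)).filter (· ∈ KV C E c₀))
    (fun c hc => hc₀.of_mem_KV (Finset.mem_filter.1 hc).2)
    ⟨c₀, Finset.mem_filter.2 ⟨hc₀.mem_cells, .refl⟩⟩
  exact ⟨m, (Finset.mem_filter.1 hm).2, fun c hc hne =>
    hmax c (Finset.mem_filter.2 ⟨(hc₀.of_mem_KV hc).mem_cells, hc⟩) hne⟩

lemma cslt_of_cslt_top {qslt : Finset V → Finset V → Prop}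
    (hpres : ∀ σ ∈ C.X, ∀ ω ∈ C.X, ω.card = n + 1 → slt σ ω → qslt σ ω) :
    ∀ {c c' : Cell V}, IsCell C c → IsCell C c' → cslt slt c c' → cslt qslt c c'
  | some _, some _, hc, hc', h => hpres _ hc.1 _ hc'.1 hc'.2 h
  | some _, none, _, _, _ => trivial
  | none, _, _, _, h => h.elim

end Orders

section PersistencePairs

variable {C : NComplex V n} {slt : Finset V → Finset V → Prop} {τ ω : Finset V}

lemma IsPersPair.isMaxCell_self (h : IsPersPair C slt τ ω) :
    IsMaxCell slt (KV C (Egt C slt τ) (some ω)) (some ω) := by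
  obtain ⟨-, -, -, -, _, -, -, -, -, -, -, hmax, -⟩ := h
  rwa [KV_eq_of_mem hmax.1]

lemma IsPersPair.exists_reachable_above (h : IsPersPair C slt τ ω) :
    ∃ m, IsCell C m ∧ cslt slt (some ω) m ∧
      ∀ E, Egt C slt τ ⊆ E → τ ∈ E → m ∈ KV C E (some ω) := by
  obtain ⟨-, -, -, -, c₁, c₂, hne, hf₁, hf₂, -, m, hmax₁, hmax₂, hωm⟩ := h
  refine ⟨m, (IsCell.of_faceCell hf₂).of_mem_KV hmax₂.1, hωm, fun E hsub hτ => ?_⟩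
  exact ((KV_mono hsub _ (mem_KV_comm.1 hmax₁.1)).tail ⟨τ, hτ, hf₁, hf₂, hne⟩).trans
    (KV_mono hsub _ hmax₂.1)

lemma IsPersPair.not_slt (ho : IsStrictTotalOn C.X slt) {τ' : Finset V}
    (h : IsPersPair C slt τ ω) (h' : IsPersPair C slt τ' ω) : ¬ slt τ τ' := by
  intro hlt
  obtain ⟨m, hm, hωm, hreach⟩ := h'.exists_reachable_above
  have hmKV : m ∈ KV C (Egt C slt τ) (some ω) :=
    hreach _ (fun e ⟨he, hec, hτ'e⟩ => ⟨he, hec, ho.trans _ h.1 _ h'.1 _ he hlt hτ'e⟩)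
      ⟨h'.1, h'.2.1, hlt⟩
  have hmω : m ≠ some ω := by
    rintro rfl
    exact cslt_irrefl ho hm hωm
  exact cslt_asymm ho (a := some ω) ⟨h.2.2.1, h.2.2.2.1⟩ hm hωm (h.isMaxCell_self.2 m hmKV hmω)

lemma IsPersPair.unique (ho : IsStrictTotalOn C.X slt) {τ' : Finset V}
    (h : IsPersPair C slt τ ω) (h' : IsPersPair C slt τ' ω) : τ = τ' := by
  by_contra hne
  rcases ho.total _ h.1 _ h'.1 hne with hlt | hlt
  exacts [h.not_slt ho h' hlt, h'.not_slt ho h hlt]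

lemma OV_eq_KV (ho : IsStrictTotalOn C.X slt) (h : IsPersPair C slt τ ω) :
    OV C slt ω = KV C (Egt C slt τ) (some ω) := by
  ext c
  refine ⟨fun ⟨τ', h', hc⟩ => ?_, fun hc => ⟨τ, h, hc⟩⟩
  rwa [h.unique ho h']

lemma isPersPair_of_separating_edge (ho : IsStrictTotalOn C.X slt) (hτ : τ ∈ C.X)
    (hτc : τ.card = n) (hω : ω ∈ C.X) (hωc : ω.card = n + 1) {y z m : Cell V}
    (hy : faceCell C τ y) (hz : faceCell C τ z) (hyz : y ≠ z)
    (hωy : some ω ∈ KV C (Egt C slt τ) y) (hzy : z ∉ KV C (Egt C slt τ) y)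
    (hmax : ∀ c ∈ KV C (Egt C slt τ) y, c ≠ some ω → cslt slt c (some ω))
    (hm : m ∈ KV C (Egt C slt τ) z) (hωm : cslt slt (some ω) m) :
    IsPersPair C slt τ ω := by
  have hzcell := IsCell.of_faceCell hz
  obtain ⟨m', hm'⟩ := exists_isMaxCell_KV ho hzcell (E := Egt C slt τ)
  refine ⟨hτ, hτc, hω, hωc, y, z, hyz, hy, hz, hzy, m', ⟨hωy, hmax⟩, hm', ?_⟩
  rcases eq_or_ne m m' with rfl | hmm'
  · exact hωm
  exact cslt_trans ho (a := some ω) ⟨hω, hωc⟩ (hzcell.of_mem_KV hm) (hzcell.of_mem_KV hm'.1) hωm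
    (hm'.2 m hm hmm')

end PersistencePairs

section StableVolume

variable {C : NComplex V n} {lev : Finset V → ℝ} {slt : Finset V → Finset V → Prop}
  {τ₀ ω₀ : Finset V} {ε : ℝ}

lemma Elev_subset_Egt (hr : IsOWL C lev slt) (hτ₀ : τ₀ ∈ C.X) (hε : 0 < ε) :
    Elev C lev (lev τ₀ + ε) ⊆ Egt C slt τ₀ := by
  rintro e ⟨he, hec, hle⟩
  refine ⟨he, hec, (hr.2.2.2.1 τ₀ hτ₀ e he ?_).resolve_right fun h => ?_⟩
  · rintro rfl
    linarith
  · linarith [hr.2.2.2.2.1 e he τ₀ hτ₀ h]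

lemma le_of_mem_Ege (hr : IsOWL C lev slt) (hτ₀ : τ₀ ∈ C.X) {e : Finset V}
    (he : e ∈ Ege C slt τ₀) : lev τ₀ ≤ lev e := by
  rcases he with ⟨he, -, rfl | hlt⟩
  exacts [le_rfl, hr.2.2.2.2.1 τ₀ hτ₀ e he hlt]

lemma IsPersPair.cslt_of_mem_SV (hr : IsOWL C lev slt) (h : IsPersPair C slt τ₀ ω₀)
    (hε : 0 < ε) {c : Cell V} (hc : c ∈ SV C lev τ₀ ω₀ ε) (hne : c ≠ some ω₀) :
    cslt slt c (some ω₀) :=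
  h.isMaxCell_self.2 c (KV_mono (Elev_subset_Egt hr h.1 hε) _ hc) hne

lemma IsPersPair.exists_exit_SV (hr : IsOWL C lev slt) (htwo : TwoCofaces C)
    (h : IsPersPair C slt τ₀ ω₀) (hε : 0 < ε) :
    ∃ τ ∈ Ege C slt τ₀, lev τ < lev τ₀ + ε ∧ ∃ y z, faceCell C τ y ∧ faceCell C τ z ∧
      y ≠ z ∧ y ∈ SV C lev τ₀ ω₀ ε ∧ z ∉ SV C lev τ₀ ω₀ ε ∧
      ∃ m, IsCell C m ∧ cslt slt (some ω₀) m ∧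
        ReflTransGen (adj C (edgesAwayFrom C (Ege C slt τ₀) (SV C lev τ₀ ω₀ ε))) z m := by
  obtain ⟨m, hm, hωm, hreach⟩ := h.exists_reachable_above
  have hmSV : m ∉ SV C lev τ₀ ω₀ ε := fun hmSV =>
    cslt_asymm hr.isStrictTotalOn (a := some ω₀) ⟨h.2.2.1, h.2.2.2.1⟩ hm hωm
      (h.cslt_of_mem_SV hr hε hmSV fun hmω => cslt_irrefl hr.isStrictTotalOn hm (hmω ▸ hωm))
  obtain ⟨τ, hτ, y, z, hy, hz, hyz, hyS, hzS, hzm⟩ :=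
    exists_exit_edge (E := Ege C slt τ₀) htwo (fun e he => ⟨he.1, he.2.1⟩)
      (.refl : some ω₀ ∈ SV C lev τ₀ ω₀ ε)
      hmSV (hreach _ (fun e ⟨he, hec, hlt⟩ => ⟨he, hec, Or.inr hlt⟩) ⟨h.1, h.2.1, Or.inl rfl⟩)
  refine ⟨τ, hτ, ?_, y, z, hy, hz, hyz, hyS, hzS, m, hm, hωm, hzm⟩
  by_contra! hle
  exact hzS (ReflTransGen.tail hyS ⟨τ, ⟨hτ.1, hτ.2.1, hle⟩, hy, hz, hyz⟩)

end StableVolume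

section Perturbation

def lexSlt (lev : Finset V → ℝ) (slt : Finset V → Finset V → Prop) (σ σ' : Finset V) :
    Prop :=
  lev σ < lev σ' ∨ (lev σ = lev σ' ∧ slt σ σ')

variable {C : NComplex V n} {rlev qlev : Finset V → ℝ} {rslt : Finset V → Finset V → Prop}
  {η m : ℝ} {A : Set (Finset V)} {τ : Finset V}

lemma IsOWL.lexSlt (hr : IsOWL C rlev rslt) (hq : IsLevelFun C qlev) :
    IsOWL C qlev (lexSlt qlev rslt) := by
  obtain ⟨-, hirr, htr, htot, -, hsub⟩ := hr
  refine ⟨hq, ?_, ?_, ?_, ?_, ?_⟩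
  · rintro σ hσ (h | h)
    exacts [lt_irrefl _ h, hirr σ hσ h.2]
  · rintro a ha b hb c hc (hab | ⟨hab, hab'⟩) (hbc | ⟨hbc, hbc'⟩)
    · exact Or.inl (hab.trans hbc)
    · exact Or.inl (hbc ▸ hab)
    · exact Or.inl (hab ▸ hbc)
    · exact Or.inr ⟨hab.trans hbc, htr a ha b hb c hc hab' hbc'⟩
  · intro a ha b hb hne
    rcases lt_trichotomy (qlev a) (qlev b) with h | h | h
    · exact Or.inl (Or.inl h)
    · exact (htot a ha b hb hne).imp (fun h' => Or.inr ⟨h, h'⟩) fun h' => Or.inr ⟨h.symm, h'⟩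
    · exact Or.inr (Or.inl h)
  · rintro σ - σ' - (h | h)
    exacts [h.le, h.1.le]
  · intro σ hσ σ' hσ' hss
    exact (hq σ hσ σ' hσ' hss).lt_or_eq.imp id fun h => ⟨h, hsub σ hσ σ' hσ' hss⟩

lemma IsLevelFun.update {f : Finset V → ℝ} (hf : IsLevelFun C f) {a : ℝ}
    (hbelow : ∀ σ ∈ C.X, σ ⊂ τ → f σ ≤ a) (habove : ∀ σ ∈ C.X, τ ⊂ σ → a ≤ f σ) :
    IsLevelFun C (Function.update f τ a) := by
  intro σ hσ σ' hσ' hss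
  rcases eq_or_ne σ τ with rfl | hστ
  · rw [Function.update_self, Function.update_of_ne hss.ne']
    exact habove σ' hσ' hss
  rcases eq_or_ne σ' τ with rfl | hσ'τ
  · rw [Function.update_self, Function.update_of_ne hστ]
    exact hbelow σ hσ hss
  rw [Function.update_of_ne hστ, Function.update_of_ne hσ'τ]
  exact hf σ hσ σ' hσ' hss

lemma NComplex.card_le_of_mem (C : NComplex V n) {σ : Finset V} (hσ : σ ∈ C.X) :
    σ.card ≤ n + 1 := by
  obtain ⟨ω, -, hσω, hωc⟩ := C.contained_top σ hσ
  exact hωc ▸ Finset.card_le_card hσω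

lemma pertLev_of_card {σ : Finset V} (hσ : σ ∈ C.X) (hσc : σ.card = n + 1) :
    pertLev C rlev η A σ = rlev σ + η :=
  if_pos (Or.inl ⟨hσ, hσc⟩)

lemma pertLev_of_mem {σ : Finset V} (hσ : σ ∈ A) : pertLev C rlev η A σ = rlev σ + η :=
  if_pos (Or.inr hσ)

lemma pertLev_of_notMem {σ : Finset V} (hσc : σ.card ≠ n + 1) (hσ : σ ∉ A) :
    pertLev C rlev η A σ = rlev σ - η :=
  if_neg (by tauto)

lemma isLevelFun_pertLev (hr : IsLevelFun C rlev) (hη : 0 ≤ η) (hA : ∀ e ∈ A, e.card = n) :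
    IsLevelFun C (pertLev C rlev η A) := by
  intro σ hσ σ' hσ' hss
  have hle := hr σ hσ σ' hσ' hss
  have hcard := Finset.card_lt_card hss
  have hσ'c := C.card_le_of_mem hσ'
  unfold pertLev
  split_ifs with h h'
  · linarith
  · -- raised simplices are upward closed, as `A` consists of codimension-one faces
    refine absurd (Or.inl ⟨hσ', ?_⟩) h'
    rcases h with ⟨-, hσc⟩ | hσA
    · omega
    · have := hA σ hσA
      omega
  · linarith
  · linarith

/-- `q(r, η, A)` with `τ` moved to level `m`: for `m` between the lowered and the raised
levels, the edges above `τ` in the resulting order are exactly those of `A`. -/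
noncomputable def pertLevAt (C : NComplex V n) (rlev : Finset V → ℝ) (η : ℝ)
    (A : Set (Finset V)) (τ : Finset V) (m : ℝ) : Finset V → ℝ :=
  Function.update (pertLev C rlev η A) τ m

lemma isLevelFun_pertLevAt (hr : IsLevelFun C rlev) (hA : ∀ e ∈ A, e.card = n)
    (hτ : τ ∈ C.X) (hτc : τ.card = n) (hm : |m - rlev τ| ≤ η) :
    IsLevelFun C (pertLevAt C rlev η A τ m) := by
  have hm' := abs_sub_le_iff.1 hm
  refine (isLevelFun_pertLev hr ((abs_nonneg _).trans hm) hA).update (fun σ hσ hστ => ?_)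
    fun σ hσ hτσ => ?_
  · have hσc := Finset.card_lt_card hστ
    rw [pertLev_of_notMem (by omega) fun hσA => by have := hA σ hσA; omega]
    linarith [hr σ hσ τ hτ hστ]
  · have hσc := Finset.card_lt_card hτσ
    rw [pertLev_of_card hσ (by have := C.card_le_of_mem hσ; omega)]
    linarith [hr τ hτ σ hσ hτσ]

lemma abs_pertLevAt_sub_le (hm : |m - rlev τ| ≤ η) (σ : Finset V) :
    |pertLevAt C rlev η A τ m σ - rlev σ| ≤ η := by
  rcases eq_or_ne σ τ with rfl | hστ
  · rwa [pertLevAt, Function.update_self]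
  rw [pertLevAt, Function.update_of_ne hστ, pertLev]
  have hη : 0 ≤ η := (abs_nonneg _).trans hm
  split_ifs <;> simp [abs_of_nonneg hη]

lemma lexSlt_pertLevAt_of_top (hr : IsOWL C rlev rslt) (hτc : τ.card = n)
    (hm : |m - rlev τ| ≤ η) {σ ω : Finset V} (hσ : σ ∈ C.X) (hω : ω ∈ C.X)
    (hωc : ω.card = n + 1) (h : rslt σ ω) : lexSlt (pertLevAt C rlev η A τ m) rslt σ ω := by
  have hωτ : ω ≠ τ := by
    rintro rfl
    omega
  have hσle : pertLevAt C rlev η A τ m σ ≤ rlev σ + η := by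
    linarith [(abs_sub_le_iff.1 (abs_pertLevAt_sub_le (C := C) (A := A) hm σ)).1]
  have hωeq : pertLevAt C rlev η A τ m ω = rlev ω + η := by
    rw [pertLevAt, Function.update_of_ne hωτ, pertLev_of_card hω hωc]
  have hle : pertLevAt C rlev η A τ m σ ≤ pertLevAt C rlev η A τ m ω := by
    linarith [hr.2.2.2.2.1 σ hσ ω hω h]
  exact hle.lt_or_eq.imp id fun heq => ⟨heq, h⟩

lemma Egt_lexSlt_pertLevAt (hirr : ∀ σ ∈ C.X, ¬ rslt σ σ)
    (hA : ∀ e ∈ A, e ∈ C.X ∧ e.card = n ∧ m < rlev e + η) (hτA : τ ∉ A)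
    (hlow : ∀ e ∈ C.X, e.card = n → e ∉ A → e ≠ τ → rlev e - η < m) :
    Egt C (lexSlt (pertLevAt C rlev η A τ m) rslt) τ = A := by
  have hτ : pertLevAt C rlev η A τ m τ = m := Function.update_self _ _ _
  ext e
  refine ⟨fun ⟨he, hec, hτe⟩ => ?_, fun he => ?_⟩
  · by_contra heA
    rcases eq_or_ne e τ with rfl | heτ
    · rcases hτe with h | h
      exacts [lt_irrefl _ h, hirr e he h.2]
    have hqe : pertLevAt C rlev η A τ m e = rlev e - η := by
      rw [pertLevAt, Function.update_of_ne heτ, pertLev_of_notMem (by omega) heA]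
    have hle : m ≤ rlev e - η := by
      rcases hτe with h | h
      exacts [hτ ▸ hqe ▸ h.le, hτ ▸ hqe ▸ h.1.le]
    linarith [hlow e he hec heA heτ]
  · obtain ⟨he', hec, hme⟩ := hA e he
    refine ⟨he', hec, Or.inl ?_⟩
    rwa [hτ, pertLevAt, Function.update_of_ne (ne_of_mem_of_not_mem he hτA),
      pertLev_of_mem he]

lemma exists_le_lt_forall_le {α : Type*} (s : Finset α) (f : α → ℝ) {a t : ℝ}
    (hat : a < t) : ∃ M, a ≤ M ∧ M < t ∧ ∀ σ ∈ s, f σ < t → f σ ≤ M := by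
  set T := insert a ((s.filter (f · < t)).image f)
  refine ⟨T.max' (Finset.insert_nonempty _ _), T.le_max' _ (Finset.mem_insert_self _ _), ?_,
    fun σ hσ hlt => T.le_max' _ (Finset.mem_insert_of_mem (Finset.mem_image_of_mem f
      (Finset.mem_filter.2 ⟨hσ, hlt⟩)))⟩
  rcases Finset.mem_insert.1 (T.max'_mem (Finset.insert_nonempty _ _)) with h | h
  · rwa [h]
  · obtain ⟨σ, hσ, hσM⟩ := Finset.mem_image.1 h
    exact hσM ▸ (Finset.mem_filter.1 hσ).2

lemma exists_perturbed_order (hr : IsOWL C rlev rslt) {s ε : ℝ}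
    (hA : ∀ e ∈ A, e ∈ C.X ∧ e.card = n ∧ s ≤ rlev e) (hElev : Elev C rlev (s + ε) ⊆ A)
    (hτ : τ ∈ C.X) (hτc : τ.card = n) (hτA : τ ∉ A) (hsτ : s ≤ rlev τ)
    (hτε : rlev τ < s + ε) :
    ∃ (qlev : Finset V → ℝ) (qslt : Finset V → Finset V → Prop), IsOWL C qlev qslt ∧
      (∀ σ ∈ C.X, |qlev σ - rlev σ| < ε / 2) ∧
      (∀ σ ∈ C.X, ∀ ω ∈ C.X, ω.card = n + 1 → rslt σ ω → qslt σ ω) ∧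
      Egt C qslt τ = A := by
  -- `M` is the highest level below `s + ε`, so every edge outside `A` drops below `m`
  obtain ⟨M, hτM, hMε, hgap⟩ := exists_le_lt_forall_le C.X rlev hτε
  set η := (M - s + ε) / 4 with hη
  set m := (s + M) / 2 with hm
  have hmτ : |m - rlev τ| ≤ η := abs_le.2 ⟨by linarith, by linarith⟩
  refine ⟨pertLevAt C rlev η A τ m, lexSlt (pertLevAt C rlev η A τ m) rslt,
    hr.lexSlt (isLevelFun_pertLevAt hr.1 (fun e he => (hA e he).2.1) hτ hτc hmτ),
    fun σ _ => (abs_pertLevAt_sub_le hmτ σ).trans_lt (by linarith),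
    fun σ hσ ω hω hωc => lexSlt_pertLevAt_of_top hr hτc hmτ hσ hω hωc,
    Egt_lexSlt_pertLevAt hr.2.1 (fun e he => ?_) hτA fun e he hec heA _ => ?_⟩
  · obtain ⟨he', hec, hse⟩ := hA e he
    exact ⟨he', hec, by linarith⟩
  · have hlt : rlev e < s + ε := not_le.1 fun hle => heA (hElev ⟨he, hec, hle⟩)
    linarith [hgap e he hlt]

end Perturbation

theorem exists_q_optimal_volume_avoids_general
    (C : NComplex V n) (htwo : TwoCofaces C)
    (rlev : Finset V → ℝ) (rslt : Finset V → Finset V → Prop)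
    (hr : IsOWL C rlev rslt)
    (τ₀ ω₀ : Finset V) (hpair : IsPersPair C rslt τ₀ ω₀)
    (ε : ℝ) (hε : 0 < ε)
    (ωt : Finset V)
    (hωt : (some ωt : Cell V) ∉ SV C rlev τ₀ ω₀ ε) :
    ∃ (qlev : Finset V → ℝ) (qslt : Finset V → Finset V → Prop),
      InR C rlev rslt ω₀ ε qlev qslt ∧ (some ωt : Cell V) ∉ OV C qslt ω₀ := by
  have hω₀ : IsCell C (some ω₀) := ⟨hpair.2.2.1, hpair.2.2.2.1⟩
  obtain ⟨τ, hτ, hτε, y, z, hy, hz, hyz, hySV, hzSV, m, hm, hωm, hzm⟩ :=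
    hpair.exists_exit_SV hr htwo hε
  set A := Elev C rlev (rlev τ₀ + ε) ∪
    edgesAwayFrom C (Ege C rslt τ₀) (SV C rlev τ₀ ω₀ ε)
  have hA : ∀ e ∈ A, e ∈ C.X ∧ e.card = n ∧ rlev τ₀ ≤ rlev e := by
    rintro e (⟨he, hec, hle⟩ | ⟨he, -⟩)
    exacts [⟨he, hec, by linarith⟩, ⟨he.1, he.2.1, le_of_mem_Ege hr hpair.1 he⟩]
  have hτA : τ ∉ A := by
    rintro (⟨-, -, hle⟩ | ⟨-, hτS⟩)
    exacts [hle.not_gt hτε, hτS y hy hySV]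
  obtain ⟨qlev, qslt, hq, hclose, hpres, hEgt⟩ := exists_perturbed_order hr hA
    Set.subset_union_left hτ.1 hτ.2.1 hτA (le_of_mem_Ege hr hpair.1 hτ) hτε
  have hKVω : KV C A (some ω₀) = SV C rlev τ₀ ω₀ ε := KV_union_edgesAwayFrom
  have hKVy : KV C A y = SV C rlev τ₀ ω₀ ε := by
    rw [KV_eq_of_mem (hKVω ▸ hySV), hKVω]
  have hqpair : IsPersPair C qslt τ ω₀ := by
    refine isPersPair_of_separating_edge hq.isStrictTotalOn hτ.1 hτ.2.1 hω₀.1 hω₀.2 hy hz hyz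
      ?_ ?_ ?_ ?_ (cslt_of_cslt_top hpres hω₀ hm hωm) <;> rw [hEgt]
    · exact hKVy ▸ .refl
    · exact hKVy ▸ hzSV
    · intro c hc hne
      rw [hKVy] at hc
      exact cslt_of_cslt_top hpres (hω₀.of_mem_KV hc) hω₀ (hpair.cslt_of_mem_SV hr hε hc hne)
    · exact KV_mono Set.subset_union_right z hzm
  refine ⟨qlev, qslt, ⟨hq, hclose, fun σ hσ => hpres σ hσ ω₀ hω₀.1 hω₀.2⟩, ?_⟩
  rwa [OV_eq_KV hq.isStrictTotalOn hqpair, hEgt, hKVω]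

/-- Claim 3.5: every `n`-simplex outside the stable volume is
avoided by the optimal volume of some `q ∈ R_ε`. -/
theorem exists_q_optimal_volume_avoids
    (hn : 2 ≤ n) (C : NComplex V n) (htwo : TwoCofaces C) (hconn : DualConn C)
    (rlev : Finset V → ℝ) (rslt : Finset V → Finset V → Prop)
    (hr : IsOWL C rlev rslt)
    (τ₀ ω₀ : Finset V) (hpair : IsPersPair C rslt τ₀ ω₀)
    (ε : ℝ) (hε : 0 < ε)
    (ωt : Finset V) (hωtX : ωt ∈ C.X) (hωtc : ωt.card = n + 1)
    (hωt : (some ωt : Cell V) ∉ SV C rlev τ₀ ω₀ ε) :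
    ∃ (qlev : Finset V → ℝ) (qslt : Finset V → Finset V → Prop),
      InR C rlev rslt ω₀ ε qlev qslt ∧ (some ωt : Cell V) ∉ OV C qslt ω₀ :=
  exists_q_optimal_volume_avoids_general C htwo rlev rslt hr τ₀ ω₀ hpair ε hε ωt hωt

end StableVol
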